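/- arXiv:2005.03190 — 5 statements merged into one kernel-verified Lean document; each statement's English description precedes it below -/
import Mathlib

section
/- Let y₁,…,y_N, x̃₁,…,x̃_N ∈ ℝ³ with Σᵢ mᵢ x̃ᵢ = 0, mᵢ, kᵢ > 0, M = Σᵢ mᵢ, μ > 0, J = −Σᵢ mᵢ (x̃ᵢ)̂². For a state (p, R, v, ω) with Rᵀ R = I, define the total force f = Σᵢ kᵢ(yᵢ − R x̃ᵢ − p) − μ M v and total torque τ = Σᵢ (kᵢ x̃ᵢ × (Rᵀ(yᵢ − p)) − μ mᵢ x̃ᵢ × (ω × x̃ᵢ)). Then the instantaneous rate of change of the total energy along the dynamics satisfies ⟨v, f⟩ + ⟨ω, τ − ω × J ω⟩ + Σᵢ kᵢ ⟨yᵢ − R x̃ᵢ − p, −R(ω × x̃ᵢ) − v⟩ = −μ M ‖v‖² − μ ⟨ω, J ω⟩ ≤ 0. -/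
/-!
The gyroscopic term `⟪ω, ω × Jω⟫` vanishes. Since `R` is orthogonal, the power `⟪ω, x̃ᵢ × Rᵀ(yᵢ - p)⟫` of the spring torque equals
`⟪yᵢ - R x̃ᵢ - p, R(ω × x̃ᵢ)⟫` (the `R x̃ᵢ` part contributes `⟪x̃ᵢ, ω × x̃ᵢ⟫ = 0`), so the spring
contributions of force and torque cancel exactly against the derivative of the potential energy.
What remains is the damping: `-μM‖v‖²` from the force and `-μ Σᵢ mᵢ ‖ω × x̃ᵢ‖² = -μ⟪ω, Jω⟫`
from the torque, both nonpositive.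
-/

open Matrix Filter
open scoped RealInnerProductSpace

noncomputable section

/-- Vectors in ℝ³ with the Euclidean norm. -/
abbrev V3 : Type := EuclideanSpace ℝ (Fin 3)

/-- The cross product on ℝ³. -/
def cross3 (a b : V3) : V3 :=
  WithLp.toLp 2 ![a 1 * b 2 - a 2 * b 1, a 2 * b 0 - a 0 * b 2, a 0 * b 1 - a 1 * b 0]

/-- The skew-symmetric matrix `â` of a vector, satisfying `â b = a × b`. -/
def hat (a : V3) : Matrix (Fin 3) (Fin 3) ℝ :=
  !![0, -(a 2), a 1; a 2, 0, -(a 0); -(a 1), a 0, 0]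

/-- Action of a 3×3 matrix on a vector in ℝ³. -/
def act (R : Matrix (Fin 3) (Fin 3) ℝ) (v : V3) : V3 := WithLp.toLp 2 (R.mulVec v)

/-- Membership in SO(3). -/
def isSO3 (R : Matrix (Fin 3) (Fin 3) ℝ) : Prop := Rᵀ * R = 1 ∧ R.det = 1

lemma act_eq_toEuclideanLin (A : Matrix (Fin 3) (Fin 3) ℝ) (v : V3) :
    act A v = Matrix.toEuclideanLin A v := rfl

lemma act_mul (A B : Matrix (Fin 3) (Fin 3) ℝ) (v : V3) : act (A * B) v = act A (act B v) := by
  simp only [act, WithLp.ofLp_toLp, Matrix.mulVec_mulVec]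

lemma inner_act_transpose_left (A : Matrix (Fin 3) (Fin 3) ℝ) (a b : V3) :
    ⟪act Aᵀ a, b⟫ = ⟪a, act A b⟫ := by
  rw [act_eq_toEuclideanLin, act_eq_toEuclideanLin, ← Matrix.conjTranspose_eq_transpose_of_trivial,
    Matrix.toEuclideanLin_conjTranspose_eq_adjoint, LinearMap.adjoint_inner_left]

lemma act_one (v : V3) : act 1 v = v := by
  simp [act]

lemma inner_act_act_of_transpose_mul_self {R : Matrix (Fin 3) (Fin 3) ℝ} (hR : Rᵀ * R = 1)
    (a b : V3) : ⟪act R a, act R b⟫ = ⟪a, b⟫ := by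
  rw [← inner_act_transpose_left, ← act_mul, hR, act_one]

lemma cross3_anticomm (a b : V3) : cross3 a b = -cross3 b a := by
  ext j; fin_cases j <;> simp [cross3] <;> ring

lemma inner_cross3_cycle (a b c : V3) : ⟪a, cross3 b c⟫ = ⟪c, cross3 a b⟫ := by
  simp [PiLp.inner_apply, Fin.sum_univ_three, cross3]; ring

lemma inner_cross3_self_left (a b : V3) : ⟪a, cross3 a b⟫ = 0 := by
  simp [PiLp.inner_apply, Fin.sum_univ_three, cross3]; ring

lemma inner_cross3_self_right (a b : V3) : ⟪b, cross3 a b⟫ = 0 := by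
  simp [PiLp.inner_apply, Fin.sum_univ_three, cross3]; ring

lemma act_hat (a b : V3) : act (hat a) b = cross3 a b := by
  ext j; fin_cases j <;>
    simp [act, hat, dotProduct, Fin.sum_univ_three, cross3] <;> ring

lemma inner_cross3_cross3_self (ω a : V3) : ⟪ω, cross3 a (cross3 ω a)⟫ = ‖cross3 ω a‖ ^ 2 := by
  rw [inner_cross3_cycle, real_inner_self_eq_norm_sq]

lemma inner_act_hat_mul_hat (a ω : V3) : ⟪ω, act (hat a * hat a) ω⟫ = -‖cross3 ω a‖ ^ 2 := by
  rw [act_mul, act_hat, act_hat, inner_cross3_cycle, cross3_anticomm ω a, inner_neg_right,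
    real_inner_self_eq_norm_sq, norm_neg]

def inertiaTensor {N : ℕ} (m : Fin N → ℝ) (x : Fin N → V3) : Matrix (Fin 3) (Fin 3) ℝ :=
  -∑ i, m i • (hat (x i) * hat (x i))

lemma inner_act_inertiaTensor {N : ℕ} (m : Fin N → ℝ) (x : Fin N → V3) (ω : V3) :
    ⟪ω, act (inertiaTensor m x) ω⟫ = ∑ i, m i * ‖cross3 ω (x i)‖ ^ 2 := by
  rw [inertiaTensor, act_eq_toEuclideanLin, map_neg, map_sum, LinearMap.neg_apply,
    LinearMap.sum_apply, inner_neg_right, inner_sum, ← Finset.sum_neg_distrib]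
  refine Finset.sum_congr rfl fun i _ => ?_
  rw [map_smul, LinearMap.smul_apply, real_inner_smul_right, ← act_eq_toEuclideanLin,
    inner_act_hat_mul_hat, mul_neg, neg_neg]

lemma inner_act_inertiaTensor_nonneg {N : ℕ} {m : Fin N → ℝ} (hm : ∀ i, 0 ≤ m i)
    (x : Fin N → V3) (ω : V3) : 0 ≤ ⟪ω, act (inertiaTensor m x) ω⟫ := by
  rw [inner_act_inertiaTensor]
  exact Finset.sum_nonneg fun i _ => mul_nonneg (hm i) (sq_nonneg _)

lemma inner_cross3_act_transpose {R : Matrix (Fin 3) (Fin 3) ℝ} (hR : Rᵀ * R = 1) (ω x y : V3) :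
    ⟪ω, cross3 x (act Rᵀ y)⟫ = ⟪y - act R x, act R (cross3 ω x)⟫ := by
  rw [inner_cross3_cycle, inner_act_transpose_left, inner_sub_left,
    inner_act_act_of_transpose_mul_self hR, inner_cross3_self_right, sub_zero]

theorem energy_dissipation_rate_general (N : ℕ) (m k : Fin N → ℝ) (hm : ∀ i, 0 < m i)
    (μ : ℝ) (hμ : 0 < μ) (y xt : Fin N → V3)
    (M : ℝ) (hM : M = ∑ i, m i)
    (J : Matrix (Fin 3) (Fin 3) ℝ) (hJ : J = -∑ i, m i • (hat (xt i) * hat (xt i)))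
    (p : V3) (R : Matrix (Fin 3) (Fin 3) ℝ) (v ω : V3) (hR : Rᵀ * R = 1)
    (f τ : V3)
    (hf : f = ∑ i, k i • (y i - act R (xt i) - p) - (μ * M) • v)
    (hτ : τ = ∑ i, (k i • cross3 (xt i) (act Rᵀ (y i - p))
        - (μ * m i) • cross3 (xt i) (cross3 ω (xt i)))) :
    ⟪v, f⟫ + ⟪ω, τ - cross3 ω (act J ω)⟫
        + ∑ i, k i * ⟪y i - act R (xt i) - p, -act R (cross3 ω (xt i)) - v⟫
      = -(μ * M) * ‖v‖ ^ 2 - μ * ⟪ω, act J ω⟫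
    ∧ -(μ * M) * ‖v‖ ^ 2 - μ * ⟪ω, act J ω⟫ ≤ 0 := by
  set e : Fin N → V3 := fun i => y i - act R (xt i) - p
  set u : Fin N → V3 := fun i => act R (cross3 ω (xt i))
  have hJω : ⟪ω, act J ω⟫ = ∑ i, m i * ‖cross3 ω (xt i)‖ ^ 2 :=
    hJ ▸ inner_act_inertiaTensor m xt ω
  have htrans : ⟪v, f⟫ = ∑ i, k i * ⟪e i, v⟫ - μ * M * ‖v‖ ^ 2 := by
    simp only [hf, inner_sub_right, inner_sum, real_inner_smul_right,
      real_inner_self_eq_norm_sq, real_inner_comm v, e]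
  have hrot : ⟪ω, τ - cross3 ω (act J ω)⟫ = ∑ i, k i * ⟪e i, u i⟫ - μ * ⟪ω, act J ω⟫ := by
    simp only [hτ, hJω, inner_sub_right, inner_sum, real_inner_smul_right,
      inner_cross3_self_left, sub_zero, inner_cross3_act_transpose hR, inner_cross3_cross3_self,
      Finset.sum_sub_distrib, Finset.mul_sum, sub_right_comm (y _) p, e, u, mul_assoc]
  have hpot : ∑ i, k i * ⟪e i, -u i - v⟫ = -∑ i, k i * ⟪e i, u i⟫ - ∑ i, k i * ⟪e i, v⟫ := by
    simp only [inner_sub_right, inner_neg_right, mul_sub, mul_neg, Finset.sum_sub_distrib,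
      Finset.sum_neg_distrib]
  have hM0 : 0 ≤ M := hM ▸ Finset.sum_nonneg fun i _ => (hm i).le
  have hJ0 : 0 ≤ ⟪ω, act J ω⟫ := hJ ▸ inner_act_inertiaTensor_nonneg (fun i => (hm i).le) xt ω
  refine ⟨by linarith, ?_⟩
  linarith [mul_nonneg (mul_nonneg hμ.le hM0) (sq_nonneg ‖v‖), mul_nonneg hμ.le hJ0]

/-- the instantaneous rate of change of the total energy along the
dynamics equals the (nonpositive) viscous dissipation rate. -/
theorem energy_dissipation_rate (N : ℕ) (m k : Fin N → ℝ) (hm : ∀ i, 0 < m i)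
    (hk : ∀ i, 0 < k i) (μ : ℝ) (hμ : 0 < μ) (y xt : Fin N → V3)
    (hcm : ∑ i, m i • xt i = 0)
    (M : ℝ) (hM : M = ∑ i, m i)
    (J : Matrix (Fin 3) (Fin 3) ℝ) (hJ : J = -∑ i, m i • (hat (xt i) * hat (xt i)))
    (p : V3) (R : Matrix (Fin 3) (Fin 3) ℝ) (v ω : V3) (hR : Rᵀ * R = 1)
    (f τ : V3)
    (hf : f = ∑ i, k i • (y i - act R (xt i) - p) - (μ * M) • v)
    (hτ : τ = ∑ i, (k i • cross3 (xt i) (act Rᵀ (y i - p))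
        - (μ * m i) • cross3 (xt i) (cross3 ω (xt i)))) :
    ⟪v, f⟫ + ⟪ω, τ - cross3 ω (act J ω)⟫
        + ∑ i, k i * ⟪y i - act R (xt i) - p, -act R (cross3 ω (xt i)) - v⟫
      = -(μ * M) * ‖v‖ ^ 2 - μ * ⟪ω, act J ω⟫
    ∧ -(μ * M) * ‖v‖ ^ 2 - μ * ⟪ω, act J ω⟫ ≤ 0 :=
  energy_dissipation_rate_general N m k hm μ hμ y xt M hM J hJ p R v ω hR f τ hf hτ
end
end

section
/- Let ω : ℝ → ℝ³ be continuous and let R : ℝ → ℝ^{3×3} be differentiable with Ṙ(t) = R(t)·(ω(t))̂ for all t, where â denotes the skew-symmetric matrix of a ∈ ℝ³. If R(0)ᵀ R(0) = I and det R(0) = 1, then R(t)ᵀ R(t) = I and det R(t) = 1 for all t; i.e., SO(3) is invariant under the kinematic equation Ṙ = R ω̂. -/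
open Matrix Filter
open scoped RealInnerProductSpace

noncomputable section

attribute [local instance] Matrix.normedAddCommGroup Matrix.normedSpace

/-!
Put `D = RᵀR - 1`. Because `ω̂` is skew-symmetric, `D` satisfies the Lax equation
`Ḋ = D ω̂ - ω̂ D`, so `(D²)˙ = D² ω̂ - ω̂ D²` is a commutator and `tr (D²)` is constant, equal to
its value `0` at `t = 0`. As `D` is symmetric, `tr (D²) = tr (DᵀD)` is the squared Frobenius norm
of `D`, hence `D = 0`. Then `(det R)² = 1`, and the continuous function `det R` on the connected
line is constant.
-/

section MatrixCalculus

variable {𝕜 : Type*} [NontriviallyNormedField 𝕜] [CompleteSpace 𝕜] {l m n : Type*}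
  [Fintype l] [Fintype m] [Fintype n] {x : 𝕜}

theorem HasDerivAt.matrix_mul {f : 𝕜 → Matrix l m 𝕜} {g : 𝕜 → Matrix m n 𝕜}
    {f' : Matrix l m 𝕜} {g' : Matrix m n 𝕜} (hf : HasDerivAt f f' x) (hg : HasDerivAt g g' x) :
    HasDerivAt (fun y => f y * g y) (f' * g x + f x * g') x := by
  rw [add_comm]
  exact (mulLinearMap 𝕜).toContinuousBilinearMap.hasDerivAt_of_bilinear
    (fun _ => hf) (fun _ => hg)

theorem HasDerivAt.matrix_transpose {f : 𝕜 → Matrix m n 𝕜} {f' : Matrix m n 𝕜}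
    (hf : HasDerivAt f f' x) : HasDerivAt (fun y => (f y)ᵀ) f'ᵀ x :=
  (transposeLinearEquiv m n 𝕜 𝕜).toLinearMap.toContinuousLinearMap.hasFDerivAt.comp_hasDerivAt x hf

theorem HasDerivAt.matrix_trace {f : 𝕜 → Matrix n n 𝕜} {f' : Matrix n n 𝕜}
    (hf : HasDerivAt f f' x) : HasDerivAt (fun y => (f y).trace) f'.trace x :=
  (traceLinearMap n 𝕜 𝕜).toContinuousLinearMap.hasFDerivAt.comp_hasDerivAt x hf

end MatrixCalculus

theorem hat_transpose (a : V3) : (hat a)ᵀ = -hat a := by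
  ext i j
  fin_cases i <;> fin_cases j <;> simp [hat]

section Lax

variable {n : Type*} [Fintype n]

theorem hasDerivAt_trace_mul_self_of_lax {D Ω : ℝ → Matrix n n ℝ} {t : ℝ}
    (hD : HasDerivAt D (D t * Ω t - Ω t * D t) t) :
    HasDerivAt (fun s => (D s * D s).trace) 0 t := by
  have hsq : (D t * Ω t - Ω t * D t) * D t + D t * (D t * Ω t - Ω t * D t)
      = D t * D t * Ω t - Ω t * (D t * D t) := by
    simp only [sub_mul, mul_sub, Matrix.mul_assoc]; abel
  have := (hD.matrix_mul hD).matrix_trace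
  rwa [hsq, Matrix.trace_sub, Matrix.trace_mul_comm (D t * D t), sub_self] at this

theorem hasDerivAt_transpose_mul_self_sub_one [DecidableEq n] {R : ℝ → Matrix n n ℝ}
    {Ω : Matrix n n ℝ} {t : ℝ} (hR : HasDerivAt R (R t * Ω) t) (hΩ : Ωᵀ = -Ω) :
    HasDerivAt (fun s => (R s)ᵀ * R s - 1)
      (((R t)ᵀ * R t - 1) * Ω - Ω * ((R t)ᵀ * R t - 1)) t := by
  refine ((hR.matrix_transpose.matrix_mul hR).sub_const 1).congr_deriv ?_
  rw [Matrix.transpose_mul, hΩ]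
  simp only [sub_mul, mul_sub, Matrix.mul_assoc, Matrix.neg_mul, Matrix.mul_one, Matrix.one_mul]
  abel

theorem Matrix.eq_zero_of_isSymm_of_trace_mul_self_eq_zero {D : Matrix n n ℝ} (hD : D.IsSymm)
    (h : (D * D).trace = 0) : D = 0 := by
  rwa [← trace_conjTranspose_mul_self_eq_zero_iff, conjTranspose_eq_transpose_of_trivial, hD.eq]

theorem transpose_mul_self_eq_one_of_hasDerivAt [DecidableEq n] {R Ω : ℝ → Matrix n n ℝ}
    (hΩ : ∀ t, (Ω t)ᵀ = -Ω t) (hR : ∀ t, HasDerivAt R (R t * Ω t) t)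
    (h0 : (R 0)ᵀ * R 0 = 1) (t : ℝ) : (R t)ᵀ * R t = 1 := by
  set D : ℝ → Matrix n n ℝ := fun s => (R s)ᵀ * R s - 1
  have hD : ∀ s, HasDerivAt (fun s => (D s * D s).trace) 0 s := fun s =>
    hasDerivAt_trace_mul_self_of_lax (hasDerivAt_transpose_mul_self_sub_one (hR s) (hΩ s))
  have hconst := is_const_of_deriv_eq_zero (fun s => (hD s).differentiableAt)
    (fun s => (hD s).deriv) t 0
  have hsymm : (D t).IsSymm := by
    simp [D, Matrix.IsSymm, Matrix.transpose_sub]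
  exact sub_eq_zero.mp <|
    Matrix.eq_zero_of_isSymm_of_trace_mul_self_eq_zero hsymm (by simpa [D, h0] using hconst)

end Lax

theorem Matrix.det_eq_one_of_transpose_mul_self_eq_one {X R : Type*} [TopologicalSpace X]
    [PreconnectedSpace X] [CommRing R] [NoZeroDivisors R] [TopologicalSpace R] [IsTopologicalRing R]
    [T1Space R] {n : Type*} [Fintype n] [DecidableEq n] {M : X → Matrix n n R} (hM : Continuous M)
    (horth : ∀ x, (M x)ᵀ * M x = 1) {x₀ : X} (h₀ : (M x₀).det = 1) (x : X) : (M x).det = 1 := by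
  have hsq : Set.EqOn ((fun x => (M x).det) ^ 2) 1 Set.univ := fun x _ => by
    simpa [sq] using congrArg Matrix.det (horth x)
  rcases isPreconnected_univ.eq_one_or_eq_neg_one_of_sq_eq hM.matrix_det.continuousOn hsq with h | h
  · exact h (Set.mem_univ x)
  · have hneg : ∀ y, (M y).det = -1 := fun y => h (Set.mem_univ y)
    rw [hneg, ← hneg x₀]
    exact h₀

theorem SO3_invariant_under_kinematics_general (ω : ℝ → V3)
    (R : ℝ → Matrix (Fin 3) (Fin 3) ℝ)
    (hR : ∀ t : ℝ, HasDerivAt R (R t * hat (ω t)) t)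
    (h0 : (R 0)ᵀ * R 0 = 1) (hdet0 : (R 0).det = 1) :
    ∀ t : ℝ, (R t)ᵀ * R t = 1 ∧ (R t).det = 1 := by
  have horth := transpose_mul_self_eq_one_of_hasDerivAt (fun t => hat_transpose (ω t)) hR h0
  have hcont : Continuous R := continuous_iff_continuousAt.mpr fun t => (hR t).continuousAt
  exact fun t => ⟨horth t, Matrix.det_eq_one_of_transpose_mul_self_eq_one hcont horth hdet0 t⟩

/-- SO(3) is invariant under the kinematic equation `Ṙ = R ω̂`. -/
theorem SO3_invariant_under_kinematics (ω : ℝ → V3) (hω : Continuous ω)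
    (R : ℝ → Matrix (Fin 3) (Fin 3) ℝ)
    (hR : ∀ t : ℝ, HasDerivAt R (R t * hat (ω t)) t)
    (h0 : (R 0)ᵀ * R 0 = 1) (hdet0 : (R 0).det = 1) :
    ∀ t : ℝ, (R t)ᵀ * R t = 1 ∧ (R t).det = 1 :=
  SO3_invariant_under_kinematics_general ω R hR h0 hdet0
end
end

section
/- Let y₁,…,y_N, x̃₁,…,x̃_N ∈ ℝ³ with Σᵢ mᵢ x̃ᵢ = 0 and Σᵢ mᵢ yᵢ = 0, masses mᵢ > 0, spring constants kᵢ = 2 mᵢ, total mass M = Σᵢ mᵢ, μ > 0, and suppose J = −Σᵢ mᵢ (x̃ᵢ)̂² is invertible. Then a state s = (p, R, v, ω) with R ∈ SO(3) is an equilibrium of the dynamics (ṗ = v, Ṙ = R ω̂, M v̇ = f(s), J ω̇ = τ(s) − ω × J ω, with f and τ the total force and torque) if and only if v = 0, ω = 0, p = 0, and Σᵢ kᵢ x̃ᵢ × (Rᵀ yᵢ) = 0. In particular, at every equilibrium the center of mass of the moving cloud coincides with the (weighted) center of mass of the static cloud. -/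
/-! At rest (`v = 0`, `ω = 0`) the damping terms drop out. Since `kᵢ = 2mᵢ`, both weighted
centroids also vanish with the weights `kᵢ`, so the total spring force reduces to
`-(Σᵢ kᵢ) p`; invertibility of `J` forces `N > 0`, hence `Σᵢ kᵢ > 0` and `p = 0`.
The torque equation then reads `Σᵢ kᵢ x̃ᵢ × (Rᵀ yᵢ) = 0`, and `R ω̂ = 0` gives `ω = 0`
because `R` is orthogonal. -/

open Matrix Filter
open scoped RealInnerProductSpace

noncomputable section

@[simp]
lemma cross3_zero_left (b : V3) : cross3 0 b = 0 := by
  ext i; fin_cases i <;> simp [cross3]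

@[simp]
lemma cross3_zero_right (a : V3) : cross3 a 0 = 0 := by
  ext i; fin_cases i <;> simp [cross3]

lemma act_eq_toLpLin (R : Matrix (Fin 3) (Fin 3) ℝ) (v : V3) :
    act R v = Matrix.toLpLin 2 2 R v := by
  rw [Matrix.toLpLin_apply, act]

@[simp]
lemma act_zero (R : Matrix (Fin 3) (Fin 3) ℝ) : act R 0 = 0 := by
  rw [act_eq_toLpLin, map_zero]

lemma act_sum_smul {ι : Type*} [Fintype ι] (R : Matrix (Fin 3) (Fin 3) ℝ) (c : ι → ℝ)
    (x : ι → V3) : act R (∑ i, c i • x i) = ∑ i, c i • act R (x i) := by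
  simp only [act_eq_toLpLin, map_sum, map_smul]

lemma hat_eq_zero_iff {a : V3} : hat a = 0 ↔ a = 0 := by
  refine ⟨fun h => ?_, fun h => ?_⟩
  · ext i
    fin_cases i
    · simpa [hat] using congrFun (congrFun h 2) 1
    · simpa [hat] using congrFun (congrFun h 0) 2
    · simpa [hat] using congrFun (congrFun h 1) 0
  · subst h
    ext i j
    fin_cases i <;> fin_cases j <;> simp [hat]

lemma eq_zero_of_mul_eq_zero_of_transpose_mul_eq_one {n α : Type*} [Fintype n] [DecidableEq n]
    [Semiring α] {A B : Matrix n n α}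
    (hA : Aᵀ * A = 1) (h : A * B = 0) : B = 0 := by
  simpa [← Matrix.mul_assoc, hA] using congrArg (Aᵀ * ·) h

lemma nonempty_of_isUnit_sum {ι R : Type*} [Fintype ι] [Semiring R] [Nontrivial R]
    {f : ι → R} (h : IsUnit (∑ i, f i)) : Nonempty ι := by
  by_contra hι
  rw [not_nonempty_iff] at hι
  simp at h

lemma sum_smul_eq_zero_of_eq_const_mul {ι R E : Type*} [Fintype ι] [CommSemiring R]
    [AddCommMonoid E] [Module R E] {m k : ι → R} {c : R} (hk : ∀ i, k i = c * m i)
    {w : ι → E} (hw : ∑ i, m i • w i = 0) : ∑ i, k i • w i = 0 := by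
  simp_rw [hk, mul_smul, ← Finset.smul_sum, hw, smul_zero]

lemma sum_smul_spring_eq_neg {ι : Type*} [Fintype ι] (k : ι → ℝ) (y x : ι → V3)
    (R : Matrix (Fin 3) (Fin 3) ℝ) (p : V3) (hy : ∑ i, k i • y i = 0)
    (hx : ∑ i, k i • x i = 0) :
    ∑ i, k i • (y i - act R (x i) - p) = -((∑ i, k i) • p) := by
  have hRx : ∑ i, k i • act R (x i) = 0 := by rw [← act_sum_smul, hx, act_zero]
  simp only [smul_sub, Finset.sum_sub_distrib, ← Finset.sum_smul, hy, hRx, sub_zero, zero_sub]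

theorem equilibrium_characterization_general (N : ℕ) (m k : Fin N → ℝ)
    (hm : ∀ i, 0 < m i) (hkm : ∀ i, k i = 2 * m i) (μ : ℝ)
    (y xt : Fin N → V3) (hcm : ∑ i, m i • xt i = 0) (hycm : ∑ i, m i • y i = 0)
    (M : ℝ)
    (J : Matrix (Fin 3) (Fin 3) ℝ) (hJ : J = -∑ i, m i • (hat (xt i) * hat (xt i)))
    (hJinv : IsUnit J)
    (p : V3) (R : Matrix (Fin 3) (Fin 3) ℝ) (v ω : V3) (hR : isSO3 R) :
    (v = 0
      ∧ R * hat ω = 0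
      ∧ (∑ i, k i • (y i - act R (xt i) - p)) - (μ * M) • v = 0
      ∧ (∑ i, (k i • cross3 (xt i) (act Rᵀ (y i - p))
          - (μ * m i) • cross3 (xt i) (cross3 ω (xt i)))) - cross3 ω (act J ω) = 0)
    ↔ (v = 0 ∧ ω = 0 ∧ p = 0 ∧ ∑ i, k i • cross3 (xt i) (act Rᵀ (y i)) = 0) := by
  have hforce := sum_smul_spring_eq_neg k y xt R p
    (sum_smul_eq_zero_of_eq_const_mul hkm hycm) (sum_smul_eq_zero_of_eq_const_mul hkm hcm)
  have : Nonempty (Fin N) := nonempty_of_isUnit_sum ((IsUnit.neg_iff _).1 (hJ ▸ hJinv))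
  have hk_pos : 0 < ∑ i, k i :=
    Finset.sum_pos (fun i _ => by rw [hkm i]; linarith [hm i]) Finset.univ_nonempty
  constructor
  · rintro ⟨rfl, hRω, hf, hτ⟩
    obtain rfl : ω = 0 :=
      hat_eq_zero_iff.1 (eq_zero_of_mul_eq_zero_of_transpose_mul_eq_one hR.1 hRω)
    obtain rfl : p = 0 := by
      rw [smul_zero, sub_zero, hforce, neg_eq_zero, smul_eq_zero] at hf
      exact hf.resolve_left hk_pos.ne'
    simpa using hτ
  · rintro ⟨rfl, rfl, rfl, hτ⟩
    refine ⟨rfl, by rw [hat_eq_zero_iff.2 rfl, Matrix.mul_zero], ?_, by simpa using hτ⟩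
    rw [hforce, smul_zero, smul_zero, neg_zero, sub_zero]

/-- characterization of the equilibrium points of the registration
dynamics: a state `(p, R, v, ω)` with `R ∈ SO(3)` is an equilibrium iff `v = 0`,
`ω = 0`, `p = 0` (the centers of mass coincide) and the total spring torque
`∑ kᵢ x̃ᵢ × (Rᵀ yᵢ)` vanishes. -/
theorem equilibrium_characterization (N : ℕ) (m k : Fin N → ℝ)
    (hm : ∀ i, 0 < m i) (hkm : ∀ i, k i = 2 * m i) (μ : ℝ) (hμ : 0 < μ)
    (y xt : Fin N → V3) (hcm : ∑ i, m i • xt i = 0) (hycm : ∑ i, m i • y i = 0)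
    (M : ℝ) (hM : M = ∑ i, m i)
    (J : Matrix (Fin 3) (Fin 3) ℝ) (hJ : J = -∑ i, m i • (hat (xt i) * hat (xt i)))
    (hJinv : IsUnit J)
    (p : V3) (R : Matrix (Fin 3) (Fin 3) ℝ) (v ω : V3) (hR : isSO3 R) :
    (v = 0
      ∧ R * hat ω = 0
      ∧ (∑ i, k i • (y i - act R (xt i) - p)) - (μ * M) • v = 0
      ∧ (∑ i, (k i • cross3 (xt i) (act Rᵀ (y i - p))
          - (μ * m i) • cross3 (xt i) (cross3 ω (xt i)))) - cross3 ω (act J ω) = 0)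
    ↔ (v = 0 ∧ ω = 0 ∧ p = 0 ∧ ∑ i, k i • cross3 (xt i) (act Rᵀ (y i)) = 0) :=
  equilibrium_characterization_general N m k hm hkm μ y xt hcm hycm M J hJ hJinv p R v ω hR
end
end

section
/- (Global invariant set theorem.) Let F : ℝⁿ → ℝⁿ be locally Lipschitz and V : ℝⁿ → ℝ be continuously differentiable such that (i) V(x) → ∞ as ‖x‖ → ∞, and (ii) ⟨∇V(x), F(x)⟩ ≤ 0 for all x ∈ ℝⁿ. Then for every initial condition x₀ ∈ ℝⁿ, the solution x(·) of ẋ = F(x), x(0) = x₀ exists for all t ≥ 0 and is bounded, and its ω-limit set is nonempty, compact, invariant under the flow of F, and contained in the set R = {x ∈ ℝⁿ : ⟨∇V(x), F(x)⟩ = 0}; consequently x(t) converges to the largest invariant set contained in R, i.e., dist(x(t), that set) → 0 as t → ∞. -/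
/-!
Along every solution `V` is nonincreasing, so a solution starting at `x₀` stays in the compact
sublevel set `S = {V ≤ V x₀}`. Multiplying `F` by a cutoff equal to `1` on `S` gives a globally
Lipschitz, bounded field `G` whose solutions exist for all time and, while they stay in `S`, are
solutions of `F`: this gives existence and boundedness. Compactness of `S` makes the ω-limit set
`Ω` nonempty, compact and attracting, and continuous dependence on initial data for `G`
(Grönwall) makes it invariant. Finally `V (x t)` decreases to a limit `c`, so `V = c` on `Ω`;
as `Ω` is invariant, `V` is constant along solutions inside `Ω`, whence `⟪∇V, F⟫ = 0` on `Ω`.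
-/

open Filter Metric
open scoped RealInnerProductSpace Topology

noncomputable section

/-- A set `I` is invariant for the flow of `ẋ = F(x)` if every solution starting in
`I` remains in `I` for all future time. -/
def IsFlowInvariant {n : ℕ} (F : EuclideanSpace ℝ (Fin n) → EuclideanSpace ℝ (Fin n))
    (I : Set (EuclideanSpace ℝ (Fin n))) : Prop :=
  ∀ x : ℝ → EuclideanSpace ℝ (Fin n),
    (∀ t, 0 ≤ t → HasDerivAt x (F (x t)) t) → x 0 ∈ I → ∀ t, 0 ≤ t → x t ∈ I

/-- The ω-limit set of a trajectory: all limits of `x (t k)` along sequences `t k → ∞`. -/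
def omegaLimitSet {n : ℕ} (x : ℝ → EuclideanSpace ℝ (Fin n)) :
    Set (EuclideanSpace ℝ (Fin n)) :=
  {a | ∃ u : ℕ → ℝ, Tendsto u atTop atTop ∧ Tendsto (fun k => x (u k)) atTop (𝓝 a)}

open Set
open scoped NNReal

section Lipschitz

variable {α β 𝕜 : Type*} [MetricSpace α] [NormedAddCommGroup β]

lemma LocallyLipschitz.exists_lipschitzWith_of_hasCompactSupport [ProperSpace α] {f : α → β}
    (hf : LocallyLipschitz f) (hsupp : HasCompactSupport f) : ∃ K, LipschitzWith K f := by
  set T := cthickening 1 (tsupport f)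
  obtain ⟨L, hL⟩ := hf.locallyLipschitzOn.exists_lipschitzOnWith_of_compact
    (s := T) hsupp.isCompact.cthickening
  obtain ⟨M, hM⟩ := hf.continuous.bounded_above_of_compact_support hsupp
  have hvanish : ∀ a b, a ∉ T → dist a b ≤ 1 → f b = 0 := fun a b ha hab =>
    image_eq_zero_of_notMem_tsupport fun hb => ha (mem_cthickening_of_dist_le a b 1 _ hb hab)
  refine ⟨(L + 2 * M).toNNReal, LipschitzWith.of_dist_le' fun a b => ?_⟩
  have hM0 : 0 ≤ M := (norm_nonneg _).trans (hM a)
  rcases le_or_gt 1 (dist a b) with hab | hab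
  · have : dist (f a) (f b) ≤ 2 * M := by
      rw [dist_eq_norm]; linarith [norm_sub_le (f a) (f b), hM a, hM b]
    nlinarith [L.coe_nonneg]
  by_cases hT : a ∈ T ∧ b ∈ T
  · nlinarith [hL.dist_le_mul a hT.1 b hT.2, dist_nonneg (x := a) (y := b)]
  have hfab : f a = f b := by
    rcases not_and_or.1 hT with ha | hb
    · rw [hvanish a a ha (by simp), hvanish a b ha hab.le]
    · rw [hvanish b a hb (dist_comm a b ▸ hab.le), hvanish b b hb (by simp)]
  rw [hfab, dist_self]
  positivity

variable [NormedField 𝕜] [NormedSpace 𝕜 β]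

lemma LipschitzOnWith.smul {s : Set α} {c : α → 𝕜} {f : α → β} {Kc Kf : ℝ≥0} {Mc Mf : ℝ}
    (hc : LipschitzOnWith Kc c s) (hf : LipschitzOnWith Kf f s)
    (hcM : ∀ a ∈ s, ‖c a‖ ≤ Mc) (hfM : ∀ a ∈ s, ‖f a‖ ≤ Mf) :
    LipschitzOnWith (Mc * Kf + Kc * Mf).toNNReal (fun a => c a • f a) s := by
  refine LipschitzOnWith.of_dist_le' fun a ha b hb => ?_
  calc dist (c a • f a) (c b • f b) = ‖c a • (f a - f b) + (c a - c b) • f b‖ := by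
        rw [dist_eq_norm, smul_sub, sub_smul]; abel_nf
    _ ≤ ‖c a‖ * ‖f a - f b‖ + ‖c a - c b‖ * ‖f b‖ := by
        grw [norm_add_le, norm_smul, norm_smul]
    _ ≤ Mc * (Kf * dist a b) + (Kc * dist a b) * Mf := by
        rw [← dist_eq_norm, ← dist_eq_norm]
        gcongr
        · exact (norm_nonneg _).trans (hcM a ha)
        · exact hcM a ha
        · exact hf.dist_le_mul a ha b hb
        · exact hc.dist_le_mul a ha b hb
        · exact hfM b hb
    _ = (Mc * Kf + Kc * Mf) * dist a b := by ring

lemma LocallyLipschitz.smul [ProperSpace α] {c : α → 𝕜} {f : α → β} (hc : LocallyLipschitz c)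
    (hf : LocallyLipschitz f) : LocallyLipschitz fun a => c a • f a := by
  intro a
  have hK := isCompact_closedBall a 1
  obtain ⟨Kc, hKc⟩ := hc.locallyLipschitzOn.exists_lipschitzOnWith_of_compact hK
  obtain ⟨Kf, hKf⟩ := hf.locallyLipschitzOn.exists_lipschitzOnWith_of_compact hK
  obtain ⟨Mc, hMc⟩ := hK.exists_bound_of_continuousOn hc.continuous.continuousOn
  obtain ⟨Mf, hMf⟩ := hK.exists_bound_of_continuousOn hf.continuous.continuousOn
  exact ⟨_, closedBall a 1, closedBall_mem_nhds a one_pos, hKc.smul hKf hMc hMf⟩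

end Lipschitz

lemma Filter.Tendsto.isCompact_setOf_le {X γ : Type*} [TopologicalSpace X] [LinearOrder γ]
    [NoMaxOrder γ] [TopologicalSpace γ] [ClosedIicTopology γ] {V : X → γ}
    (hcoercive : Tendsto V (cocompact X) atTop) (hV : Continuous V) (c : γ) :
    IsCompact {a | V a ≤ c} := by
  obtain ⟨K, hK, hKc⟩ := mem_cocompact.1 (hcoercive.eventually (eventually_gt_atTop c))
  refine hK.of_isClosed_subset (isClosed_Iic.preimage hV) fun a ha => ?_
  by_contra haK
  exact (hKc haK).not_ge ha

section AutonomousODE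

variable {E : Type*} [NormedAddCommGroup E] [NormedSpace ℝ E] {G : E → E} {K M : ℝ≥0}

lemma dist_le_mul_exp_of_lipschitzWith (hG : LipschitzWith K G) {y z : ℝ → E} {t : ℝ}
    (ht : 0 ≤ t) (hy : ∀ s ∈ Icc 0 t, HasDerivAt y (G (y s)) s)
    (hz : ∀ s ∈ Icc 0 t, HasDerivAt z (G (z s)) s) :
    dist (y t) (z t) ≤ dist (y 0) (z 0) * Real.exp (K * t) := by
  simpa using dist_le_of_trajectories_ODE (v := fun _ => G) (fun _ => hG)
    (HasDerivAt.continuousOn hy) (fun s hs => (hy s (Ico_subset_Icc_self hs)).hasDerivWithinAt)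
    (HasDerivAt.continuousOn hz) (fun s hs => (hz s (Ico_subset_Icc_self hs)).hasDerivWithinAt)
    le_rfl t ⟨ht, le_rfl⟩

variable [CompleteSpace E]

lemma exists_forall_mem_Ioo_hasDerivAt_of_lipschitzWith (hG : LipschitzWith K G)
    (hM : ∀ a, ‖G a‖ ≤ M) (x₀ : E) (T : ℝ≥0) :
    ∃ x : ℝ → E, x 0 = x₀ ∧ ∀ t ∈ Ioo (-T : ℝ) T, HasDerivAt x (G (x t)) t := by
  have hPL : IsPicardLindelof (fun _ => G) (tmin := -T) (tmax := T)
      ⟨0, by simp⟩ x₀ (M * T) 0 M K :=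
    .of_time_independent (fun a _ => hM a) hG.lipschitzOnWith (by simp)
  obtain ⟨x, hx0, hx⟩ := hPL.exists_eq_forall_mem_Icc_hasDerivWithinAt₀
  exact ⟨x, hx0, fun t ht => (hx t (Ioo_subset_Icc_self ht)).hasDerivAt (Icc_mem_nhds ht.1 ht.2)⟩

lemma exists_forall_hasDerivAt_of_lipschitzWith (hG : LipschitzWith K G)
    (hM : ∀ a, ‖G a‖ ≤ M) (x₀ : E) : ∃ x : ℝ → E, x 0 = x₀ ∧ ∀ t, HasDerivAt x (G (x t)) t := by
  choose f hf0 hf using fun N : ℕ =>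
    exists_forall_mem_Ioo_hasDerivAt_of_lipschitzWith hG hM x₀ (N + 1)
  push_cast at hf
  have agree : ∀ (N N' : ℕ) (s : ℝ), |s| < N + 1 → |s| < N' + 1 → f N s = f N' s := by
    intro N N' s hsN hsN'
    set r := min ((N : ℝ) + 1) (N' + 1)
    have hr : 0 < r := lt_min (by positivity) (by positivity)
    have hsub : ∀ N'' : ℕ, r ≤ N'' + 1 → Ioo (-r) r ⊆ Ioo (-(N'' + 1 : ℝ)) (N'' + 1) :=
      fun N'' h => Ioo_subset_Ioo (neg_le_neg h) h
    refine ODE_solution_unique_of_mem_Ioo (v := fun _ => G) (s := fun _ => univ)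
      (fun _ _ => hG.lipschitzOnWith) (t₀ := 0) ⟨neg_lt_zero.2 hr, hr⟩
      (fun t ht => ⟨hf N t (hsub N (min_le_left _ _) ht), trivial⟩)
      (fun t ht => ⟨hf N' t (hsub N' (min_le_right _ _) ht), trivial⟩)
      ((hf0 N).trans (hf0 N').symm) (abs_lt.1 (lt_min hsN hsN'))
  have hceil : ∀ s : ℝ, |s| < ⌈|s|⌉₊ + 1 := fun s => (Nat.le_ceil _).trans_lt (lt_add_one _)
  refine ⟨fun t => f ⌈|t|⌉₊ t, (agree _ 0 0 (hceil 0) (by simp)).trans (hf0 0), fun t => ?_⟩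
  have hlocal : (fun s => f ⌈|s|⌉₊ s) =ᶠ[𝓝 t] f ⌈|t|⌉₊ := by
    filter_upwards [continuous_abs.continuousAt.eventually_lt continuousAt_const (hceil t)]
      with s hs using agree _ _ s (hceil s) hs
  exact (hf _ t (abs_lt.1 (hceil t))).congr_of_eventuallyEq hlocal

end AutonomousODE

section Lyapunov

variable {H : Type*} [NormedAddCommGroup H] [InnerProductSpace ℝ H] [CompleteSpace H]
  {F : H → H} {V : H → ℝ}

lemma HasGradientAt.comp_hasDerivAt {g v : H} {y : ℝ → H} {t : ℝ}
    (hV : HasGradientAt V g (y t)) (hy : HasDerivAt y v t) :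
    HasDerivAt (fun s => V (y s)) ⟪g, v⟫ t := by
  have h := (hasGradientAt_iff_hasFDerivAt.1 hV).comp_hasDerivAt t hy
  rw [InnerProductSpace.toDual_apply_apply] at h
  exact h

lemma antitoneOn_comp_of_inner_gradient_nonpos (hV : Differentiable ℝ V)
    (hdissip : ∀ a, ⟪gradient V a, F a⟫ ≤ 0) {x : ℝ → H}
    (hx : ∀ t, 0 ≤ t → HasDerivAt x (F (x t)) t) :
    AntitoneOn (fun t => V (x t)) (Ici 0) := by
  have hVx : ∀ t, 0 ≤ t → HasDerivAt (fun s => V (x s)) ⟪gradient V (x t), F (x t)⟫ t :=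
    fun t ht => (hV (x t)).hasGradientAt.comp_hasDerivAt (hx t ht)
  refine antitoneOn_of_hasDerivWithinAt_nonpos (f' := fun t => ⟪gradient V (x t), F (x t)⟫)
    (convex_Ici 0) (HasDerivAt.continuousOn fun t ht => hVx t ht) (fun t ht => ?_)
    fun t _ => hdissip _
  rw [interior_Ici] at ht
  exact (hVx t (le_of_lt ht)).hasDerivWithinAt

lemma exists_tendsto_comp_of_inner_gradient_nonpos (hV : Differentiable ℝ V)
    (hbdd : BddBelow (range V)) (hdissip : ∀ a, ⟪gradient V a, F a⟫ ≤ 0) {x : ℝ → H}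
    (hx : ∀ t, 0 ≤ t → HasDerivAt x (F (x t)) t) :
    ∃ c, Tendsto (fun t => V (x t)) atTop (𝓝 c) := by
  have hanti := antitoneOn_comp_of_inner_gradient_nonpos hV hdissip hx
  have hW : Antitone fun t => V (x (max t 0)) := fun s t hst =>
    hanti (mem_Ici.2 (le_max_right _ _)) (mem_Ici.2 (le_max_right _ _)) (max_le_max hst le_rfl)
  refine ⟨_, (tendsto_atTop_ciInf hW (hbdd.mono (range_comp_subset_range _ V))).congr' ?_⟩
  filter_upwards [eventually_ge_atTop 0] with t ht
  rw [max_eq_left ht]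

lemma inner_gradient_eq_zero_of_forall_eq {y : ℝ → H} {v : H} (hV : DifferentiableAt ℝ V (y 0))
    (hy : HasDerivAt y v 0) (hconst : ∀ t, 0 ≤ t → V (y t) = V (y 0)) :
    ⟪gradient V (y 0), v⟫ = 0 :=
  (uniqueDiffOn_Ici 0 0 self_mem_Ici).eq_deriv _
    (hV.hasGradientAt.comp_hasDerivAt hy).hasDerivWithinAt
    ((hasDerivWithinAt_const 0 _ (V (y 0))).congr (fun t ht => hconst t ht) rfl)

variable [ProperSpace H]

lemma exists_lipschitzWith_eqOn_setOf_le (hF : LocallyLipschitz F) (hV : ContDiff ℝ 1 V)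
    (hcoercive : Tendsto V (cocompact H) atTop) (hdissip : ∀ a, ⟪gradient V a, F a⟫ ≤ 0)
    (c : ℝ) : ∃ (K M : ℝ≥0) (G : H → H), LipschitzWith K G ∧ (∀ a, ‖G a‖ ≤ M) ∧
      EqOn G F {a | V a ≤ c} ∧ ∀ a, ⟪gradient V a, G a⟫ ≤ 0 := by
  set ρ : H → ℝ := fun a => max (min (c + 1 - V a) 1) 0
  have hρ : LocallyLipschitz ρ :=
    (((LocallyLipschitz.const _).sub hV.locallyLipschitz).min_const 1).max_const 0
  have hρsupp : HasCompactSupport ρ :=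
    .intro (hcoercive.isCompact_setOf_le hV.continuous (c + 1)) fun a ha =>
      have : c + 1 < V a := not_le.1 ha
      max_eq_right ((min_le_left _ _).trans (by linarith))
  have hGsupp : HasCompactSupport fun a => ρ a • F a := hρsupp.smul_right
  obtain ⟨K, hK⟩ := (hρ.smul hF).exists_lipschitzWith_of_hasCompactSupport hGsupp
  obtain ⟨M, hM⟩ := hK.continuous.bounded_above_of_compact_support hGsupp
  refine ⟨K, M.toNNReal, fun a => ρ a • F a, hK, fun a => (hM a).trans (M.le_coe_toNNReal),
    fun a ha => ?_, fun a => ?_⟩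
  · have hρa : ρ a = 1 := by
      have : (1 : ℝ) ≤ c + 1 - V a := by linarith [show V a ≤ c from ha]
      simp only [ρ, min_eq_right this, max_eq_left zero_le_one]
    simp only [hρa, one_smul]
  · rw [inner_smul_right]
    exact mul_nonpos_of_nonneg_of_nonpos (le_max_right _ _) (hdissip a)

theorem exists_forall_hasDerivAt_of_inner_gradient_nonpos (hF : LocallyLipschitz F)
    (hV : ContDiff ℝ 1 V) (hcoercive : Tendsto V (cocompact H) atTop)
    (hdissip : ∀ a, ⟪gradient V a, F a⟫ ≤ 0) (x₀ : H) :
    ∃ x : ℝ → H, x 0 = x₀ ∧ ∀ t, 0 ≤ t → HasDerivAt x (F (x t)) t := by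
  obtain ⟨K, M, G, hGlip, hGM, hGF, hGdissip⟩ :=
    exists_lipschitzWith_eqOn_setOf_le hF hV hcoercive hdissip (V x₀)
  obtain ⟨x, hx0, hx⟩ := exists_forall_hasDerivAt_of_lipschitzWith hGlip hGM x₀
  have hanti := antitoneOn_comp_of_inner_gradient_nonpos (hV.differentiable one_ne_zero)
    hGdissip fun t _ => hx t
  refine ⟨x, hx0, fun t ht => ?_⟩
  have hxt : V (x t) ≤ V x₀ := hx0 ▸ hanti self_mem_Ici ht ht
  exact hGF hxt ▸ hx t

end Lyapunov

section OmegaLimit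

variable {n : ℕ} {x : ℝ → EuclideanSpace ℝ (Fin n)}

local notation "ℝⁿ" => EuclideanSpace ℝ (Fin n)

lemma omegaLimitSet_eq_iInter_closure_image_Ici (x : ℝ → ℝⁿ) :
    omegaLimitSet x = ⋂ T : ℝ, closure (x '' Ici T) := by
  ext a
  simp only [mem_iInter]
  constructor
  · rintro ⟨u, hu, hxu⟩ T
    exact mem_closure_of_tendsto hxu <| (hu.eventually_ge_atTop T).mono fun k hk => ⟨u k, hk, rfl⟩
  · intro ha
    have hnear : ∀ k : ℕ, ∃ t ≥ (k : ℝ), dist (x t) a < 1 / (k + 1) := fun k => by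
      obtain ⟨_, ⟨t, ht, rfl⟩, hd⟩ := Metric.mem_closure_iff.1 (ha k) _ Nat.one_div_pos_of_nat
      exact ⟨t, ht, by rwa [dist_comm]⟩
    choose u hu hxu using hnear
    refine ⟨u, tendsto_atTop_mono hu tendsto_natCast_atTop_atTop, ?_⟩
    exact tendsto_iff_dist_tendsto_zero.2 <| squeeze_zero (fun _ => dist_nonneg)
      (fun k => (hxu k).le) tendsto_one_div_add_atTop_nhds_zero_nat

lemma isClosed_omegaLimitSet (x : ℝ → ℝⁿ) : IsClosed (omegaLimitSet x) := by
  rw [omegaLimitSet_eq_iInter_closure_image_Ici]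
  exact isClosed_iInter fun _ => isClosed_closure

lemma omegaLimitSet_subset {S : Set ℝⁿ} (hS : IsClosed S) (hx : ∀ t, 0 ≤ t → x t ∈ S) :
    omegaLimitSet x ⊆ S := by
  rw [omegaLimitSet_eq_iInter_closure_image_Ici]
  exact (iInter_subset _ 0).trans (closure_minimal (image_subset_iff.2 hx) hS)

lemma exists_mem_omegaLimitSet_subseq_tendsto {S : Set ℝⁿ} (hS : IsCompact S)
    (hx : ∀ t, 0 ≤ t → x t ∈ S) {u : ℕ → ℝ} (hu : Tendsto u atTop atTop) :
    ∃ a ∈ omegaLimitSet x, ∃ φ : ℕ → ℕ, StrictMono φ ∧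
      Tendsto (fun k => x (u (φ k))) atTop (𝓝 a) := by
  obtain ⟨a, -, φ, hφ, hxuφ⟩ :=
    hS.tendsto_subseq' ((hu.eventually_ge_atTop 0).mono fun k hk => hx _ hk).frequently
  exact ⟨a, ⟨u ∘ φ, hu.comp hφ.tendsto_atTop, hxuφ⟩, φ, hφ, hxuφ⟩

lemma omegaLimitSet_nonempty {S : Set ℝⁿ} (hS : IsCompact S) (hx : ∀ t, 0 ≤ t → x t ∈ S) :
    (omegaLimitSet x).Nonempty :=
  let ⟨a, ha, _⟩ := exists_mem_omegaLimitSet_subseq_tendsto hS hx tendsto_natCast_atTop_atTop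
  ⟨a, ha⟩

lemma tendsto_infDist_omegaLimitSet {S : Set ℝⁿ} (hS : IsCompact S)
    (hx : ∀ t, 0 ≤ t → x t ∈ S) :
    Tendsto (fun t => infDist (x t) (omegaLimitSet x)) atTop (𝓝 0) := by
  by_contra hcon
  obtain ⟨ε, hε, hfar⟩ : ∃ ε > 0, ∀ T : ℝ, ∃ t ≥ T, ε ≤ infDist (x t) (omegaLimitSet x) := by
    simpa [Metric.tendsto_atTop, abs_of_nonneg infDist_nonneg] using hcon
  choose u hu hεu using fun k : ℕ => hfar k
  obtain ⟨a, ha, φ, -, hxuφ⟩ := exists_mem_omegaLimitSet_subseq_tendsto hS hx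
    (tendsto_atTop_mono hu tendsto_natCast_atTop_atTop)
  obtain ⟨k, hk⟩ := ((tendsto_iff_dist_tendsto_zero.1 hxuφ).eventually (gt_mem_nhds hε)).exists
  exact (hεu (φ k)).not_gt ((infDist_le_dist_of_mem ha).trans_lt hk)

lemma eq_of_mem_omegaLimitSet_of_tendsto {Y : Type*} [TopologicalSpace Y] [T2Space Y]
    {φ : ℝⁿ → Y} (hφ : Continuous φ) {c : Y} (hc : Tendsto (fun t => φ (x t)) atTop (𝓝 c))
    {a : ℝⁿ} (ha : a ∈ omegaLimitSet x) : φ a = c := by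
  obtain ⟨u, hu, hxu⟩ := ha
  exact tendsto_nhds_unique ((hφ.tendsto a).comp hxu) (hc.comp hu)

lemma isFlowInvariant_omegaLimitSet {G : ℝⁿ → ℝⁿ} {K : ℝ≥0} (hG : LipschitzWith K G)
    (hx : ∀ t, 0 ≤ t → HasDerivAt x (G (x t)) t) : IsFlowInvariant G (omegaLimitSet x) := by
  rintro z hz ⟨u, hu, hxu⟩ t ht
  refine ⟨fun k => u k + t, tendsto_atTop_add_const_right _ t hu, ?_⟩
  have hbound : ∀ᶠ k in atTop,
      dist (x (u k + t)) (z t) ≤ dist (x (u k)) (z 0) * Real.exp (K * t) := by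
    filter_upwards [hu.eventually_ge_atTop 0] with k hk
    simpa using dist_le_mul_exp_of_lipschitzWith hG ht (y := fun s => x (u k + s))
      (fun s hs => (hx _ (add_nonneg hk hs.1)).comp_const_add _ _) fun s hs => hz s hs.1
  refine tendsto_iff_dist_tendsto_zero.2 <|
    squeeze_zero' (.of_forall fun _ => dist_nonneg) hbound ?_
  simpa using (tendsto_iff_dist_tendsto_zero.1 hxu).mul_const (Real.exp (K * t))

variable {F : EuclideanSpace ℝ (Fin n) → EuclideanSpace ℝ (Fin n)}
  {V : EuclideanSpace ℝ (Fin n) → ℝ}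

lemma isFlowInvariant_setOf_le (hV : Differentiable ℝ V)
    (hdissip : ∀ a, ⟪gradient V a, F a⟫ ≤ 0) (c : ℝ) : IsFlowInvariant F {a | V a ≤ c} :=
  fun _ hx hx0 _ ht =>
    (antitoneOn_comp_of_inner_gradient_nonpos hV hdissip hx self_mem_Ici ht ht).trans hx0

lemma isFlowInvariant_omegaLimitSet_of_eqOn {G : ℝⁿ → ℝⁿ} {K : ℝ≥0} (hG : LipschitzWith K G)
    {S : Set ℝⁿ} (hS : IsClosed S) (hSinv : IsFlowInvariant F S) (hGF : EqOn G F S)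
    (hx : ∀ t, 0 ≤ t → HasDerivAt x (F (x t)) t) (hx0 : x 0 ∈ S) :
    IsFlowInvariant F (omegaLimitSet x) := by
  have hsolG : ∀ z : ℝ → ℝⁿ, (∀ t, 0 ≤ t → HasDerivAt z (F (z t)) t) → z 0 ∈ S →
      ∀ t, 0 ≤ t → HasDerivAt z (G (z t)) t := fun z hz hz0 t ht =>
    hGF (hSinv z hz hz0 t ht) ▸ hz t ht
  exact fun z hz hz0 => isFlowInvariant_omegaLimitSet hG (hsolG x hx hx0) z
    (hsolG z hz (omegaLimitSet_subset hS (hSinv x hx hx0) hz0)) hz0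

lemma omegaLimitSet_subset_setOf_inner_gradient_eq_zero (hV : Differentiable ℝ V)
    (hexists : ∀ a, ∃ y : ℝ → ℝⁿ, y 0 = a ∧ ∀ t, 0 ≤ t → HasDerivAt y (F (y t)) t)
    (hinv : IsFlowInvariant F (omegaLimitSet x)) {c : ℝ}
    (hc : Tendsto (fun t => V (x t)) atTop (𝓝 c)) :
    omegaLimitSet x ⊆ {a | ⟪gradient V a, F a⟫ = 0} := fun a ha => by
  obtain ⟨y, rfl, hy⟩ := hexists a
  have hVy : ∀ t, 0 ≤ t → V (y t) = c := fun t ht =>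
    eq_of_mem_omegaLimitSet_of_tendsto hV.continuous hc (hinv y hy ha t ht)
  exact inner_gradient_eq_zero_of_forall_eq (hV _) (hy 0 le_rfl) fun t ht =>
    (hVy t ht).trans (hVy 0 le_rfl).symm

end OmegaLimit

/-- the global invariant set theorem (LaSalle). If `V` is a radially
unbounded `C¹` function nonincreasing along the locally Lipschitz vector field `F`,
then from every initial condition the solution exists for all `t ≥ 0` and is bounded,
its ω-limit set is nonempty, compact, invariant, and contained in
`R = {x : ⟪∇V(x), F(x)⟫ = 0}`, and the solution converges to the largest invariant
set contained in `R`. -/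
theorem global_invariant_set_theorem (n : ℕ)
    (F : EuclideanSpace ℝ (Fin n) → EuclideanSpace ℝ (Fin n)) (hF : LocallyLipschitz F)
    (V : EuclideanSpace ℝ (Fin n) → ℝ) (hV : ContDiff ℝ 1 V)
    (hcoercive : Tendsto V (cocompact (EuclideanSpace ℝ (Fin n))) atTop)
    (hdissip : ∀ a, ⟪gradient V a, F a⟫ ≤ 0) :
    ∀ x₀ : EuclideanSpace ℝ (Fin n),
      (∃ x : ℝ → EuclideanSpace ℝ (Fin n),
        x 0 = x₀ ∧ ∀ t, 0 ≤ t → HasDerivAt x (F (x t)) t)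
      ∧ ∀ x : ℝ → EuclideanSpace ℝ (Fin n), x 0 = x₀ →
          (∀ t, 0 ≤ t → HasDerivAt x (F (x t)) t) →
          Bornology.IsBounded (x '' Set.Ici (0 : ℝ))
          ∧ (omegaLimitSet x).Nonempty
          ∧ IsCompact (omegaLimitSet x)
          ∧ IsFlowInvariant F (omegaLimitSet x)
          ∧ omegaLimitSet x ⊆ {a | ⟪gradient V a, F a⟫ = 0}
          ∧ Tendsto
              (fun t => infDist (x t)
                (⋃₀ {I | IsFlowInvariant F I ∧ I ⊆ {a | ⟪gradient V a, F a⟫ = 0}}))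
              atTop (𝓝 0) := by
  have hVd := hV.differentiable one_ne_zero
  have hexists := exists_forall_hasDerivAt_of_inner_gradient_nonpos hF hV hcoercive hdissip
  refine fun x₀ => ⟨hexists x₀, fun x hx0 hx => ?_⟩
  set S := {a | V a ≤ V x₀}
  have hS : IsCompact S := hcoercive.isCompact_setOf_le hV.continuous _
  have hSinv : IsFlowInvariant F S := isFlowInvariant_setOf_le hVd hdissip _
  have hx0S : x 0 ∈ S := hx0 ▸ le_refl (V x₀)
  have hxS : ∀ t, 0 ≤ t → x t ∈ S := hSinv x hx hx0S
  obtain ⟨K, -, G, hGlip, -, hGF, -⟩ :=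
    exists_lipschitzWith_eqOn_setOf_le hF hV hcoercive hdissip (V x₀)
  have hinv := isFlowInvariant_omegaLimitSet_of_eqOn hGlip hS.isClosed hSinv hGF hx hx0S
  obtain ⟨xmin, hxmin⟩ := hV.continuous.exists_forall_le hcoercive
  obtain ⟨c, hc⟩ := exists_tendsto_comp_of_inner_gradient_nonpos hVd
    ⟨V xmin, forall_mem_range.2 hxmin⟩ hdissip hx
  have hΩR := omegaLimitSet_subset_setOf_inner_gradient_eq_zero hVd hexists hinv hc
  have hΩne := omegaLimitSet_nonempty hS hxS
  refine ⟨hS.isBounded.subset (image_subset_iff.2 hxS), hΩne,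
    hS.of_isClosed_subset (isClosed_omegaLimitSet x) (omegaLimitSet_subset hS.isClosed hxS),
    hinv, hΩR, ?_⟩
  exact squeeze_zero (fun _ => infDist_nonneg)
    (fun _ => infDist_le_infDist_of_subset (subset_sUnion_of_mem ⟨hinv, hΩR⟩) hΩne)
    (tendsto_infDist_omegaLimitSet hS hxS)
end
end

section
/- Let y₁, y₂, y₃, y₄ ∈ ℝ³ be the vertices of a square centered at the origin in the z = 0 plane, yᵢ = l(cos(π(i−1)/2), sin(π(i−1)/2), 0) with l > 0, with equal masses m > 0 and equal spring constants k > 0, and take the body-frame coordinates x̃ᵢ = yᵢ. For θ ∈ ℝ let R_θ = D · R_z(θ), where R_z(θ) is the rotation by θ about the z-axis and D = diag(1, −1, −1). Then R_θ ∈ SO(3) and, for every θ, Σᵢ k(yᵢ − R_θ x̃ᵢ − 0) = 0 and Σᵢ k x̃ᵢ × (R_θᵀ yᵢ) = 0; hence every state (0, R_θ, 0, 0) is an equilibrium of the registration dynamics, and the system has infinitely many equilibrium points. -/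
open Matrix Filter
open scoped RealInnerProductSpace

noncomputable section

/-!
`D * R_z(θ)` is the half-turn about a horizontal axis, so it is symmetric and preserves the
z-axis. Since the vertices of the square sum to zero, the spring forces `y i - R y i` cancel
for every `R`. For any matrix `M`, the vertices give `∑ yᵢ × M yᵢ = 2 l² (M₂₁, -M₂₀, M₁₀ - M₀₁)`,
which vanishes for a symmetric `M` preserving the z-axis, so the torques cancel too. The
matrices for different `θ ∈ [0, π]` are distinct, since their `(0, 0)` entries `cos θ` differ.
-/

def rotZ (θ : ℝ) : Matrix (Fin 3) (Fin 3) ℝ :=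
  !![Real.cos θ, -Real.sin θ, 0; Real.sin θ, Real.cos θ, 0; 0, 0, 1]

def flipX : Matrix (Fin 3) (Fin 3) ℝ := !![1, 0, 0; 0, -1, 0; 0, 0, -1]

def squareVertex (l : ℝ) (i : Fin 4) : V3 :=
  WithLp.toLp 2 (l • ![Real.cos (Real.pi * ((i : ℕ) : ℝ) / 2),
    Real.sin (Real.pi * ((i : ℕ) : ℝ) / 2), 0])

def equilibria {ι : Type*} [Fintype ι] (k : ℝ) (y xt : ι → V3) :
    Set (V3 × Matrix (Fin 3) (Fin 3) ℝ × V3 × V3) :=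
  {s | isSO3 s.2.1 ∧ s.2.2.1 = 0 ∧ s.2.2.2 = 0
    ∧ ∑ i, k • (y i - act s.2.1 (xt i) - s.1) = 0
    ∧ ∑ i, k • cross3 (xt i) (act s.2.1ᵀ (y i - s.1)) = 0}

theorem isSO3.mul {A B : Matrix (Fin 3) (Fin 3) ℝ} (hA : isSO3 A) (hB : isSO3 B) :
    isSO3 (A * B) := by
  refine ⟨?_, by rw [det_mul, hA.2, hB.2, one_mul]⟩
  rw [transpose_mul, Matrix.mul_assoc, ← Matrix.mul_assoc Aᵀ, hA.1, Matrix.one_mul, hB.1]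

theorem isSO3.mul_right_injective {R : Matrix (Fin 3) (Fin 3) ℝ} (hR : isSO3 R) :
    Function.Injective (R * ·) := fun A B h => by
  simpa only [← Matrix.mul_assoc, hR.1, Matrix.one_mul] using congrArg (Rᵀ * ·) h

theorem isSO3_rotZ (θ : ℝ) : isSO3 (rotZ θ) := by
  have h := Real.sin_sq_add_cos_sq θ
  constructor
  · ext i j
    fin_cases i <;> fin_cases j <;>
      simp [rotZ, Matrix.mul_apply, Fin.sum_univ_three] <;> nlinarith
  · simp [rotZ, det_fin_three]
    nlinarith

theorem isSO3_flipX : isSO3 flipX := by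
  constructor
  · ext i j
    fin_cases i <;> fin_cases j <;> simp [flipX, Matrix.mul_apply, Fin.sum_univ_three]
  · simp [flipX, det_fin_three]

theorem injOn_rotZ : Set.InjOn rotZ (Set.Icc 0 Real.pi) := fun a ha b hb h =>
  Real.injOn_cos ha hb (by simpa [rotZ] using congrFun (congrFun h 0) 0)

theorem flipX_mul_rotZ (θ : ℝ) : flipX * rotZ θ =
    !![Real.cos θ, -Real.sin θ, 0; -Real.sin θ, -Real.cos θ, 0; 0, 0, -1] := by
  ext i j
  fin_cases i <;> fin_cases j <;> simp [flipX, rotZ, Matrix.mul_apply, Fin.sum_univ_three]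

theorem act_sum {ι : Type*} (s : Finset ι) (R : Matrix (Fin 3) (Fin 3) ℝ) (x : ι → V3) :
    act R (∑ i ∈ s, x i) = ∑ i ∈ s, act R (x i) := by
  simp [act, WithLp.ofLp_sum, Matrix.mulVec_sum]

theorem sum_smul_sub_act_eq_zero {ι : Type*} [Fintype ι] (k : ℝ) (R : Matrix (Fin 3) (Fin 3) ℝ)
    {x : ι → V3} (hx : ∑ i, x i = 0) : ∑ i, k • (x i - act R (x i)) = 0 := by
  rw [← Finset.smul_sum, Finset.sum_sub_distrib, ← act_sum, hx]
  simp [act]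

theorem squareVertex_eq (l : ℝ) :
    squareVertex l = ![!₂[l, 0, 0], !₂[0, l, 0], !₂[-l, 0, 0], !₂[0, -l, 0]] := by
  have h3 : Real.pi * 3 / 2 = Real.pi / 2 + Real.pi := by ring
  ext i j
  fin_cases i <;> fin_cases j <;>
    simp [squareVertex, h3, Real.cos_add_pi, Real.sin_add_pi]

theorem sum_squareVertex (l : ℝ) : ∑ i, squareVertex l i = 0 := by
  ext j
  fin_cases j <;> simp [squareVertex_eq, Fin.sum_univ_four]

theorem sum_cross3_squareVertex_act (l : ℝ) (M : Matrix (Fin 3) (Fin 3) ℝ) :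
    ∑ i, cross3 (squareVertex l i) (act M (squareVertex l i)) =
      (2 * l ^ 2) • !₂[M 2 1, -M 2 0, M 1 0 - M 0 1] := by
  ext j
  fin_cases j <;> simp [squareVertex_eq, Fin.sum_univ_four, cross3, act, Matrix.mulVec,
    dotProduct, Fin.sum_univ_three] <;> ring

theorem mk_mem_equilibria {ι : Type*} [Fintype ι] {k : ℝ} {y xt : ι → V3}
    {R : Matrix (Fin 3) (Fin 3) ℝ} (hR : isSO3 R)
    (hforce : ∑ i, k • (y i - act R (xt i) - (0 : V3)) = 0)
    (htorque : ∑ i, k • cross3 (xt i) (act Rᵀ (y i)) = 0) :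
    ((0 : V3), R, (0 : V3), (0 : V3)) ∈ equilibria k y xt :=
  ⟨hR, rfl, rfl, hforce, by simpa only [sub_zero] using htorque⟩

theorem equilibria_infinite {ι : Type*} [Fintype ι] {k : ℝ} {y xt : ι → V3}
    {R : ℝ → Matrix (Fin 3) (Fin 3) ℝ} {S : Set ℝ} (hS : S.Infinite) (hR : S.InjOn R)
    (hmem : ∀ θ ∈ S, ((0 : V3), R θ, (0 : V3), (0 : V3)) ∈ equilibria k y xt) :
    (equilibria k y xt).Infinite := by
  refine Set.Infinite.mono ?_ (hS.image (f := fun θ => ((0 : V3), R θ, (0 : V3), (0 : V3))) ?_)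
  · rintro _ ⟨θ, hθ, rfl⟩
    exact hmem θ hθ
  · exact fun a ha b hb h => hR ha hb (congrArg (fun s => s.2.1) h)

theorem square_infinite_equilibria_general (l : ℝ)
    (kspring : ℝ)
    (y : Fin 4 → V3)
    (hy : ∀ i : Fin 4, y i =
      l • ![Real.cos (Real.pi * ((i : ℕ) : ℝ) / 2),
            Real.sin (Real.pi * ((i : ℕ) : ℝ) / 2), 0])
    (xt : Fin 4 → V3) (hxt : ∀ i, xt i = y i)
    (Rz : ℝ → Matrix (Fin 3) (Fin 3) ℝ)
    (hRz : ∀ θ, Rz θ = !![Real.cos θ, -Real.sin θ, 0;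
                           Real.sin θ, Real.cos θ, 0;
                           0, 0, 1])
    (D : Matrix (Fin 3) (Fin 3) ℝ)
    (hD : D = !![1, 0, 0; 0, -1, 0; 0, 0, -1]) :
    (∀ θ : ℝ, isSO3 (D * Rz θ)
      ∧ ∑ i, kspring • (y i - act (D * Rz θ) (xt i) - (0 : V3)) = 0
      ∧ ∑ i, kspring • cross3 (xt i) (act (D * Rz θ)ᵀ (y i)) = 0)
    ∧ Set.Infinite {s : V3 × Matrix (Fin 3) (Fin 3) ℝ × V3 × V3 |
        isSO3 s.2.1 ∧ s.2.2.1 = 0 ∧ s.2.2.2 = 0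
        ∧ ∑ i, kspring • (y i - act s.2.1 (xt i) - s.1) = 0
        ∧ ∑ i, kspring • cross3 (xt i) (act s.2.1ᵀ (y i - s.1)) = 0} := by
  obtain rfl : y = squareVertex l := funext fun i => WithLp.ofLp_injective 2 (hy i)
  obtain rfl : xt = squareVertex l := funext hxt
  obtain rfl : Rz = rotZ := funext hRz
  obtain rfl : D = flipX := hD
  have balanced : ∀ θ : ℝ, isSO3 (flipX * rotZ θ)
      ∧ ∑ i, kspring • (squareVertex l i - act (flipX * rotZ θ) (squareVertex l i) - 0) = 0
      ∧ ∑ i, kspring • cross3 (squareVertex l i)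
          (act (flipX * rotZ θ)ᵀ (squareVertex l i)) = 0 := fun θ =>
    ⟨isSO3_flipX.mul (isSO3_rotZ θ),
      by simpa only [sub_zero] using sum_smul_sub_act_eq_zero kspring _ (sum_squareVertex l),
      by simp [← Finset.smul_sum, sum_cross3_squareVertex_act, flipX_mul_rotZ]⟩
  refine ⟨balanced, equilibria_infinite (Set.Icc_infinite Real.pi_pos) ?_
    fun θ _ => mk_mem_equilibria (balanced θ).1 (balanced θ).2.1 (balanced θ).2.2⟩
  exact fun a ha b hb h => injOn_rotZ ha hb (isSO3_flipX.mul_right_injective h)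

/-- for a square centered at the origin, every rotation
`R_θ = D ⬝ R_z(θ)` (a rotation by θ about the z-axis followed by a flip by π about
the x-axis) gives a torque- and force-balanced configuration; hence the registration
dynamics has infinitely many equilibrium points. -/
theorem square_infinite_equilibria (l : ℝ) (hl : 0 < l)
    (mass kspring : ℝ) (hmass : 0 < mass) (hk : 0 < kspring)
    (y : Fin 4 → V3)
    (hy : ∀ i : Fin 4, y i =
      l • ![Real.cos (Real.pi * ((i : ℕ) : ℝ) / 2),
            Real.sin (Real.pi * ((i : ℕ) : ℝ) / 2), 0])
    (xt : Fin 4 → V3) (hxt : ∀ i, xt i = y i)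
    (Rz : ℝ → Matrix (Fin 3) (Fin 3) ℝ)
    (hRz : ∀ θ, Rz θ = !![Real.cos θ, -Real.sin θ, 0;
                           Real.sin θ, Real.cos θ, 0;
                           0, 0, 1])
    (D : Matrix (Fin 3) (Fin 3) ℝ)
    (hD : D = !![1, 0, 0; 0, -1, 0; 0, 0, -1]) :
    (∀ θ : ℝ, isSO3 (D * Rz θ)
      ∧ ∑ i, kspring • (y i - act (D * Rz θ) (xt i) - (0 : V3)) = 0
      ∧ ∑ i, kspring • cross3 (xt i) (act (D * Rz θ)ᵀ (y i)) = 0)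
    ∧ Set.Infinite {s : V3 × Matrix (Fin 3) (Fin 3) ℝ × V3 × V3 |
        isSO3 s.2.1 ∧ s.2.2.1 = 0 ∧ s.2.2.2 = 0
        ∧ ∑ i, kspring • (y i - act s.2.1 (xt i) - s.1) = 0
        ∧ ∑ i, kspring • cross3 (xt i) (act s.2.1ᵀ (y i - s.1)) = 0} :=
  square_infinite_equilibria_general l kspring y hy xt hxt Rz hRz D hD
end
end
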